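/- Let k ≥ 1 and for 1 ≤ j ≤ k−1 let G_j = (I + i·X_j X_{j+1})/√2 be the unitary on (ℂ²)^{⊗k} acting as (I⊗I + i·X⊗X)/√2 on qubits j and j+1 and as the identity elsewhere, where X is the Pauli-X matrix. Let ψ = G_{k−1} ⋯ G_2 G_1 |0^k⟩. Then for every x ∈ {0,1}^k, the Born probability |⟨x|ψ⟩|² equals par_k(x); that is, the circuit of gates U_X(π/2) on the line prepares the uniform distribution over even-parity bitstrings of length k. -/
import Mathlib


/-- Flip the bits at positions `j` and `j+1` of a bitstring of length `k+1`. -/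
def flipPair {k : ℕ} (j : Fin k) (b : Fin (k + 1) → ZMod 2) : Fin (k + 1) → ZMod 2 :=
  fun i => if i = j.castSucc ∨ i = j.succ then b i + 1 else b i

/-- The gate `G_j = (I + i·X_j X_{j+1})/√2` on `k+1` qubits, acting as
`U_X(π/2) = (I⊗I + i·X⊗X)/√2` on qubits `j` and `j+1` and as the identity elsewhere,
written as a matrix in the computational basis indexed by bitstrings. -/
noncomputable def gateG {k : ℕ} (j : Fin k) :
    Matrix (Fin (k + 1) → ZMod 2) (Fin (k + 1) → ZMod 2) ℂ :=
  fun a b =>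
    (if a = b then (1 : ℂ) else 0) / (Real.sqrt 2 : ℂ)
      + Complex.I * (if a = flipPair j b then (1 : ℂ) else 0) / (Real.sqrt 2 : ℂ)

/-- The state `ψ = G_{k-1} ⋯ G_1 G_0 |0…0⟩` on `k+1` qubits (so there are `k` gates,
one for each nearest-neighbour pair on the line). -/
noncomputable def psiChain (k : ℕ) : (Fin (k + 1) → ZMod 2) → ℂ :=
  ((List.ofFn (fun j : Fin k => gateG j)).reverse.prod).mulVec
    (fun b => if b = 0 then 1 else 0)

lemma zmod2_cases : ∀ a : ZMod 2, a = 0 ∨ a = 1 := by decide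

lemma flipPair_flipPair {k : ℕ} (j : Fin k) (b : Fin (k + 1) → ZMod 2) :
    flipPair j (flipPair j b) = b := by
  funext i
  simp only [flipPair]
  split <;> [skip; rfl]
  have : ∀ a : ZMod 2, a + 1 + 1 = a := by decide
  exact this _

lemma self_ne_flipPair {k : ℕ} (j : Fin k) (x : Fin (k + 1) → ZMod 2) :
    ¬ (x = flipPair j x) := by
  intro h
  have h2 := congrFun h j.castSucc
  simp only [flipPair, if_pos (Or.inl rfl)] at h2
  have : ∀ a : ZMod 2, a ≠ a + 1 := by decide
  exact this _ h2

lemma eq_flipPair_iff {k : ℕ} (j : Fin k) (a b : Fin (k + 1) → ZMod 2) :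
    a = flipPair j b ↔ b = flipPair j a := by
  constructor <;> intro h <;> rw [h, flipPair_flipPair]

lemma flipPair_apply_ne {k : ℕ} (j : Fin k) (b : Fin (k + 1) → ZMod 2) (i : Fin (k + 1))
    (h1 : i.val ≠ j.val) (h2 : i.val ≠ j.val + 1) : flipPair j b i = b i := by
  simp only [flipPair]
  rw [if_neg]
  rintro (h | h) <;> apply_fun Fin.val at h <;> simp_all

lemma sum_flipPair {k : ℕ} (j : Fin k) (b : Fin (k + 1) → ZMod 2) :
    (∑ i, flipPair j b i) = ∑ i, b i := by
  have hne : j.castSucc ≠ j.succ := by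
    intro h; apply_fun Fin.val at h; simp at h
  have : ∀ i, flipPair j b i
      = b i + ((if i = j.castSucc then (1 : ZMod 2) else 0)
        + (if i = j.succ then (1 : ZMod 2) else 0)) := by
    intro i
    simp only [flipPair]
    by_cases h1 : i = j.castSucc
    · subst h1; simp [hne]
    · by_cases h2 : i = j.succ <;> simp [h1, h2, hne.symm]
  simp only [this]
  rw [Finset.sum_add_distrib, Finset.sum_add_distrib]
  simp
  decide

lemma mulVec_gateG {k : ℕ} (j : Fin k) (w : (Fin (k + 1) → ZMod 2) → ℂ)
    (x : Fin (k + 1) → ZMod 2) :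
    (gateG j).mulVec w x = (w x + Complex.I * w (flipPair j x)) / (Real.sqrt 2 : ℂ) := by
  have hs2 : (Real.sqrt 2 : ℂ) ≠ 0 :=
    Complex.ofReal_ne_zero.mpr (Real.sqrt_ne_zero'.mpr (by norm_num))
  simp only [Matrix.mulVec, dotProduct, gateG]
  have : ∀ b, ((if x = b then (1:ℂ) else 0) / (Real.sqrt 2 : ℂ)
      + Complex.I * (if x = flipPair j b then (1:ℂ) else 0) / (Real.sqrt 2 : ℂ)) * w b
      = (if b = x then w b / (Real.sqrt 2 : ℂ) else 0)
        + (if b = flipPair j x then Complex.I * w b / (Real.sqrt 2 : ℂ) else 0) := by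
    intro b
    have hiff := eq_flipPair_iff j x b
    have hxf := self_ne_flipPair j x
    by_cases h1 : b = x
    · subst h1
      simp [hxf]
      ring
    · by_cases h2 : b = flipPair j x
      · subst h2
        have h1' : ¬ (flipPair j x = x) := fun h => hxf h.symm
        simp [flipPair_flipPair, hxf, h1']
        ring
      · have hxb : ¬ (x = b) := fun h => h1 h.symm
        simp [hxb, hiff, h2, h1]
  simp only [this]
  rw [Finset.sum_add_distrib, Finset.sum_ite_eq', Finset.sum_ite_eq']
  simp
  ring

lemma key (k : ℕ) : ∀ (m : ℕ) (h : m ≤ k) (x : Fin (k + 1) → ZMod 2),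
    Complex.normSq ((((List.ofFn (fun j : Fin m => gateG (Fin.castLE h j))).reverse.prod).mulVec
      (fun b : Fin (k + 1) → ZMod 2 => if b = 0 then (1 : ℂ) else 0)) x)
    = if (∀ i : Fin (k + 1), m < i.val → x i = 0) ∧ (∑ i, x i) = 0
        then ((2 : ℝ) ^ m)⁻¹ else 0 := by
  intro m
  induction m with
  | zero =>
    intro h x
    simp only [List.ofFn_zero, List.reverse_nil, List.prod_nil, Matrix.one_mulVec]
    by_cases hx : x = 0
    · subst hx
      rw [if_pos rfl, if_pos ⟨fun i _ => rfl, by simp⟩]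
      simp
    · rw [if_neg hx, if_neg]
      · simp
      · rintro ⟨h1, h2⟩
        apply hx
        have hall : ∀ i : Fin k, x i.succ = 0 := fun i => h1 _ (by simp)
        have h0 : x 0 = 0 := by
          rw [Fin.sum_univ_succ] at h2
          simpa [hall] using h2
        funext i
        rcases Fin.eq_zero_or_eq_succ i with rfl | ⟨i', rfl⟩
        · exact h0
        · exact hall i'
  | succ m ih =>
    intro h x
    have h' : m ≤ k := Nat.le_of_succ_le h
    set J : Fin k := Fin.castLE h (Fin.last m) with hJdef
    have hJ : J.val = m := rfl
    have hJs : (J.succ).val = m + 1 := rfl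
    have hofn : List.ofFn (fun j : Fin (m + 1) => gateG (Fin.castLE h j))
        = (List.ofFn (fun j : Fin m => gateG (Fin.castLE h' j))).concat (gateG J) := by
      rw [List.ofFn_succ']
      congr 1
    rw [hofn, List.concat_eq_append, List.reverse_concat', List.prod_cons,
      ← Matrix.mulVec_mulVec, mulVec_gateG]
    set v := ((List.ofFn fun j : Fin m => gateG (Fin.castLE h' j)).reverse.prod).mulVec
      (fun b : Fin (k + 1) → ZMod 2 => if b = 0 then (1 : ℂ) else 0) with hvdef
    have hsq : Complex.normSq ((Real.sqrt 2 : ℂ)) = 2 := by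
      rw [Complex.normSq_ofReal, Real.mul_self_sqrt (by norm_num)]
    rcases zmod2_cases (x J.succ) with h0 | h1
    · -- x at position m+1 is 0
      have hflip : v (flipPair J x) = 0 := by
        apply Complex.normSq_eq_zero.mp
        rw [hvdef, ih h' (flipPair J x), if_neg]
        rintro ⟨c1, -⟩
        have hc := c1 J.succ (by omega)
        rw [show flipPair J x J.succ = x J.succ + 1 from if_pos (Or.inr rfl), h0] at hc
        exact one_ne_zero hc
      rw [hflip, mul_zero, add_zero, Complex.normSq_div, hsq, ih h' x]
      have hcond : ((∀ i : Fin (k + 1), m < i.val → x i = 0) ∧ (∑ i, x i) = 0)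
          ↔ ((∀ i : Fin (k + 1), m + 1 < i.val → x i = 0) ∧ (∑ i, x i) = 0) := by
        constructor
        · rintro ⟨c1, c2⟩
          exact ⟨fun i hi => c1 i (by omega), c2⟩
        · rintro ⟨c1, c2⟩
          refine ⟨fun i hi => ?_, c2⟩
          rcases Nat.lt_or_ge (m + 1) i.val with hlt | hge
          · exact c1 i hlt
          · have hieq : i.val = m + 1 := by omega
            have hi2 : i = J.succ := Fin.ext hieq
            rw [hi2]; exact h0
      by_cases hc : (∀ i : Fin (k + 1), m + 1 < i.val → x i = 0) ∧ (∑ i, x i) = 0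
      · rw [if_pos hc, if_pos (hcond.mpr hc), pow_succ, mul_inv, div_eq_mul_inv]
      · rw [if_neg hc, if_neg (fun hh => hc (hcond.mp hh)), zero_div]
    · -- x at position m+1 is 1
      have hvx : v x = 0 := by
        apply Complex.normSq_eq_zero.mp
        rw [hvdef, ih h' x, if_neg]
        rintro ⟨c1, -⟩
        have hc := c1 J.succ (by omega)
        rw [h1] at hc
        exact one_ne_zero hc
      rw [hvx, zero_add, Complex.normSq_div, Complex.normSq_mul, Complex.normSq_I, one_mul,
        hsq, ih h' (flipPair J x)]
      have hcond : ((∀ i : Fin (k + 1), m < i.val → flipPair J x i = 0)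
            ∧ (∑ i, flipPair J x i) = 0)
          ↔ ((∀ i : Fin (k + 1), m + 1 < i.val → x i = 0) ∧ (∑ i, x i) = 0) := by
        rw [sum_flipPair]
        constructor
        · rintro ⟨c1, c2⟩
          refine ⟨fun i hi => ?_, c2⟩
          have hc := c1 i (by omega)
          rwa [flipPair_apply_ne J x i (by omega) (by omega)] at hc
        · rintro ⟨c1, c2⟩
          refine ⟨fun i hi => ?_, c2⟩
          rcases Nat.lt_or_ge (m + 1) i.val with hlt | hge
          · rw [flipPair_apply_ne J x i (by omega) (by omega)]
            exact c1 i hlt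
          · have hieq : i.val = m + 1 := by omega
            have hi2 : i = J.succ := Fin.ext hieq
            rw [hi2, show flipPair J x J.succ = x J.succ + 1 from if_pos (Or.inr rfl), h1]
            decide
      by_cases hc : (∀ i : Fin (k + 1), m + 1 < i.val → x i = 0) ∧ (∑ i, x i) = 0
      · rw [if_pos hc, if_pos (hcond.mpr hc), pow_succ, mul_inv, div_eq_mul_inv]
      · rw [if_neg hc, if_neg (fun hh => hc (hcond.mp hh)), zero_div]

/-- The brickwork line of `U_X(π/2)` gates applied to `|0^k⟩` prepares the uniform
distribution over even-parity bitstrings: for every bitstring `x` of length `k+1`,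
the Born probability `|⟨x|ψ⟩|²` equals `par_{k+1}(x) = 2^{-k}` if `x` has even parity
and `0` otherwise. -/
theorem born_psiChain_eq_parEven (k : ℕ) (x : Fin (k + 1) → ZMod 2) :
    Complex.normSq (psiChain k x)
      = if (∑ i, x i) = 0 then ((2 : ℝ) ^ k)⁻¹ else 0 := by
  have hk := key k k le_rfl x
  have hfn : (fun j : Fin k => gateG (Fin.castLE le_rfl j)) = fun j : Fin k => gateG j := by
    funext j
    congr 1
  rw [hfn] at hk
  rw [psiChain, hk]
  have hiff : ((∀ i : Fin (k + 1), k < i.val → x i = 0) ∧ (∑ i, x i) = 0)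
      ↔ ((∑ i, x i) = 0) :=
    ⟨And.right, fun h => ⟨fun i hi => absurd i.isLt (by omega), h⟩⟩
  rw [if_congr hiff rfl rfl]
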